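/- arXiv:1509.01818 — 5 statements merged into one kernel-verified Lean document; each statement's English description precedes it below -/
import Mathlib

section
/- For integers $m \geq 1$ and $u_1, u_2 \in \{0, \dots, m-1\}$ with $u_1 \neq u_2$, we have $\sum_{\beta \in \mathbb{Q}^*(2^m)} \|2^{u_1}\beta\| \cdot \|2^{u_2}\beta\| = 2^m/16$. -/
open Finset

/-- Distance to the nearest integer. -/
noncomputable def dnn (x : ℝ) : ℝ := |x - round x|

/-- Real value of a bit. -/
def bitr (b : Bool) : ℝ := if b then 1 else 0

/-- First coordinate of a Hammersley point: t_m/2 + ... + t_1/2^m. -/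
noncomputable def hamX (m : ℕ) (t : Fin m → Bool) : ℝ :=
  ∑ j : Fin m, bitr (t j) / 2 ^ (m - j.val)

/-- Second coordinate of a shifted Hammersley point: s_1/2 + ... + s_m/2^m with s_j = t_j ⊕ σ_j. -/
noncomputable def hamY (m : ℕ) (σ t : Fin m → Bool) : ℝ :=
  ∑ j : Fin m, bitr (xor (t j) (σ j)) / 2 ^ (j.val + 1)

/-- Local discrepancy of the shifted Hammersley point set H_m(σ). -/
noncomputable def Δham (m : ℕ) (σ : Fin m → Bool) (α β : ℝ) : ℝ :=
  ((Finset.univ.filter (fun t : Fin m → Bool => hamX m t < α ∧ hamY m σ t < β)).card : ℝ)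
    - 2 ^ m * α * β

/-- digit i (1-based) of an m-digit vector, with value false outside 1..m. -/
def dig (m : ℕ) (a : Fin m → Bool) (i : ℕ) : Bool :=
  if h : 1 ≤ i ∧ i ≤ m then a ⟨i - 1, by omega⟩ else false

/-- The m-bit real number with binary digits a: ∑ a_j 2^{-j}. -/
noncomputable def mval (m : ℕ) (a : Fin m → Bool) : ℝ :=
  ∑ j : Fin m, bitr (a j) / 2 ^ (j.val + 1)

/-- The index function j(u) associated with digits a of α, digits b of β, and shift τ. -/
def jfun (m : ℕ) (a b τ : Fin m → Bool) (u : ℕ) : ℕ :=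
  Nat.findGreatest (fun j => dig m a (m + 1 - j) ≠ xor (dig m b j) (dig m τ j)) u

/-- Smallest m-bit number ≥ α. -/
noncomputable def upm (m : ℕ) (α : ℝ) : ℝ := (⌈2 ^ m * α⌉ : ℝ) / 2 ^ m

/-- Local discrepancy of the symmetrized Hammersley point set H_m(σ) ∪ H_m(σ*) (multiset union). -/
noncomputable def Δsym (m : ℕ) (σ : Fin m → Bool) (α β : ℝ) : ℝ :=
  (((Finset.univ.filter (fun t : Fin m → Bool => hamX m t < α ∧ hamY m σ t < β)).card : ℝ)
    + ((Finset.univ.filter (fun t : Fin m → Bool =>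
        hamX m t < α ∧ hamY m (fun j => !(σ j)) t < β)).card : ℝ))
    - 2 ^ (m + 1) * α * β

lemma dnn_zero : dnn 0 = 0 := by simp [dnn]

lemma dnn_add_int (x : ℝ) (n : ℤ) : dnn (x + n) = dnn x := by
  simp only [dnn, round_add_intCast]
  push_cast
  ring_nf

lemma dnn_of_lt_half (x : ℝ) (h0 : 0 ≤ x) (h1 : x < 1/2) : dnn x = x := by
  have : round x = 0 := round_eq_zero_iff.2 ⟨by linarith, h1⟩
  simp [dnn, this, abs_of_nonneg h0]

lemma dnn_pair (x : ℝ) (h0 : 0 ≤ x) (h1 : x < 1/2) : dnn x + dnn (x + 1/2) = 1/2 := by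
  have hr : round (x + 1/2) = 1 := by
    rw [round_eq]
    have : ⌊x + 1/2 + 1/2⌋ = 1 := by
      apply Int.floor_eq_iff.2 <;> simp <;> constructor <;> linarith
    simpa using this
  have : dnn (x + 1/2) = 1/2 - x := by
    rw [dnn, hr]
    rw [abs_of_nonpos (by push_cast; linarith)]
    push_cast; ring
  rw [this, dnn_of_lt_half x h0 h1]; ring

lemma sum_range_two_mul (h : ℕ) (f : ℕ → ℝ) :
    ∑ k ∈ range (2*h), f k = ∑ k ∈ range h, (f k + f (k + h)) := by
  rw [two_mul, Finset.sum_range_add, Finset.sum_add_distrib]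
  simp [add_comm]

lemma sum_dnn_shift (d : ℕ) (hd : 1 ≤ d) (φ : ℝ) (h0 : 0 ≤ φ) (h1 : φ < 1/2^d) :
    ∑ s ∈ range (2^d), dnn ((s : ℝ)/2^d + φ) = 2^d/4 := by
  obtain ⟨e, rfl⟩ : ∃ e, d = e + 1 := ⟨d - 1, by omega⟩
  rw [pow_succ, mul_comm ((2:ℕ)^e) 2, sum_range_two_mul]
  have key : ∀ k ∈ range (2^e), dnn ((k:ℝ)/2^(e+1) + φ) + dnn (((k + 2^e : ℕ):ℝ)/2^(e+1) + φ) = (1/2 : ℝ) := by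
    intro k hk
    have hk' : (k:ℝ) + 1 ≤ 2^e := by exact_mod_cast mem_range.1 hk
    have hp : (0:ℝ) < 2^(e+1) := by positivity
    have hx0 : 0 ≤ (k:ℝ)/2^(e+1) + φ := by positivity
    have e1 : (k:ℝ)/2^(e+1) ≤ ((2:ℝ)^e - 1)/2^(e+1) := by gcongr; linarith
    have e2 : ((2:ℝ)^e - 1)/2^(e+1) = 1/2 - 1/2^(e+1) := by
      rw [pow_succ]; field_simp; try ring
    have hx1 : (k:ℝ)/2^(e+1) + φ < 1/2 := by rw [e2] at e1; linarith
    have hpair := dnn_pair _ hx0 hx1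
    have heq : ((k + 2^e : ℕ):ℝ)/2^(e+1) + φ = (k:ℝ)/2^(e+1) + φ + 1/2 := by
      push_cast
      rw [pow_succ]
      field_simp
      try ring
    rw [heq]
    linarith
  have hs : ∑ k ∈ range (2^e), (dnn ((k:ℝ)/2^(e+1) + φ) + dnn (((k + 2^e : ℕ):ℝ)/2^(e+1) + φ))
      = ∑ _k ∈ range (2^e), (1/2 : ℝ) := Finset.sum_congr rfl key
  rw [hs]
  rw [Finset.sum_const, card_range, nsmul_eq_mul]
  push_cast [pow_succ]
  ring

lemma sum_range_mul' (M N : ℕ) (f : ℕ → ℝ) :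
    ∑ k ∈ range (M*N), f k = ∑ a ∈ range M, ∑ r ∈ range N, f (a*N + r) := by
  induction M with
  | zero => simp
  | succ M ih =>
      rw [Nat.succ_mul, Finset.sum_range_add, ih, Finset.sum_range_succ]

lemma dnn_nat_div (a r n : ℕ) :
    dnn (((a*2^n + r : ℕ):ℝ)/2^n) = dnn ((r:ℝ)/2^n) := by
  have hP' : (2:ℝ)^n ≠ 0 := by positivity
  have : ((a*2^n + r : ℕ):ℝ)/(2:ℝ)^n = (r:ℝ)/2^n + (a:ℤ) := by
    push_cast; field_simp; ring
  rw [this, dnn_add_int]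


theorem stmt0 (m : ℕ) (hm : 1 ≤ m) (u₁ u₂ : ℕ) (h₁ : u₁ ≤ m - 1) (h₂ : u₂ ≤ m - 1)
    (hne : u₁ ≠ u₂) :
    ∑ k ∈ Finset.Ioo (0:ℕ) (2 ^ m),
      dnn (2 ^ u₁ * ((k : ℝ) / 2 ^ m)) * dnn (2 ^ u₂ * ((k : ℝ) / 2 ^ m))
      = (2 : ℝ) ^ m / 16 := by
  wlog hlt : u₁ < u₂ generalizing u₁ u₂
  · rw [← this u₂ u₁ h₂ h₁ (Ne.symm hne) (by omega)]
    apply Finset.sum_congr rfl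
    intro k _
    ring
  -- notation
  set n₁ := m - u₁ with hn₁
  set n₂ := m - u₂ with hn₂
  set d := n₁ - n₂ with hd
  have hu₁ : u₁ + n₁ = m := by omega
  have hn₂1 : 1 ≤ n₂ := by omega
  have hd1 : 1 ≤ d := by omega
  have hdn : d + n₂ = n₁ := by omega
  -- rewrite each summand
  have hterm : ∀ k : ℕ, dnn (2 ^ u₁ * ((k : ℝ) / 2 ^ m)) * dnn (2 ^ u₂ * ((k : ℝ) / 2 ^ m))
      = dnn ((k:ℝ)/2^n₁) * dnn ((k:ℝ)/2^n₂) := by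
    intro k
    have e1 : (2:ℝ) ^ u₁ * ((k : ℝ) / 2 ^ m) = (k:ℝ)/2^n₁ := by
      rw [← hu₁, pow_add]
      field_simp
    have e2 : (2:ℝ) ^ u₂ * ((k : ℝ) / 2 ^ m) = (k:ℝ)/2^n₂ := by
      rw [show m = u₂ + n₂ by omega, pow_add]
      field_simp
    rw [e1, e2]
  -- extend to range
  have hrange : Finset.range (2^m) = insert 0 (Finset.Ioo (0:ℕ) (2^m)) := by
    ext k
    simp only [Finset.mem_range, Finset.mem_insert, Finset.mem_Ioo]
    have := Nat.one_le_two_pow (n := m)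
    omega
  have hS : ∑ k ∈ Finset.Ioo (0:ℕ) (2 ^ m),
      dnn (2 ^ u₁ * ((k : ℝ) / 2 ^ m)) * dnn (2 ^ u₂ * ((k : ℝ) / 2 ^ m))
      = ∑ k ∈ Finset.range (2^m), dnn ((k:ℝ)/2^n₁) * dnn ((k:ℝ)/2^n₂) := by
    rw [hrange, Finset.sum_insert (by simp)]
    simp only [Nat.cast_zero, zero_div, dnn_zero, zero_mul, zero_add]
    exact Finset.sum_congr rfl fun k _ => hterm k
  rw [hS]
  -- first split: k = a * 2^n₁ + r
  have hsplit1 : (2:ℕ)^m = 2^u₁ * 2^n₁ := by rw [← pow_add, hu₁]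
  rw [hsplit1, sum_range_mul']
  have hstep1 : ∀ a ∈ range (2^u₁), ∑ r ∈ range (2^n₁),
      dnn (((a * 2^n₁ + r : ℕ):ℝ)/2^n₁) * dnn (((a * 2^n₁ + r : ℕ):ℝ)/2^n₂)
      = ∑ r ∈ range (2^n₁), dnn ((r:ℝ)/2^n₁) * dnn ((r:ℝ)/2^n₂) := by
    intro a _
    apply Finset.sum_congr rfl
    intro r _
    rw [dnn_nat_div a r n₁]
    have : a * 2^n₁ + r = (a * 2^d) * 2^n₂ + r := by
      rw [mul_assoc, ← pow_add, hdn]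
    rw [this, dnn_nat_div _ r n₂]
  rw [Finset.sum_congr rfl hstep1, Finset.sum_const, card_range, nsmul_eq_mul]
  -- second split: r = s * 2^n₂ + t
  have hsplit2 : (2:ℕ)^n₁ = 2^d * 2^n₂ := by rw [← pow_add, hdn]
  rw [hsplit2, sum_range_mul', Finset.sum_comm]
  have hstep2 : ∀ t ∈ range (2^n₂), ∑ s ∈ range (2^d),
      dnn (((s * 2^n₂ + t : ℕ):ℝ)/2^n₁) * dnn (((s * 2^n₂ + t : ℕ):ℝ)/2^n₂)
      = dnn ((t:ℝ)/2^n₂) * (2^d/4) := by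
    intro t ht
    have ht' : (t:ℝ) < 2^n₂ := by exact_mod_cast mem_range.1 ht
    have hφ0 : (0:ℝ) ≤ (t:ℝ)/2^n₁ := by positivity
    have hφ1 : (t:ℝ)/2^n₁ < 1/2^d := by
      rw [div_lt_div_iff₀ (by positivity) (by positivity)]
      calc (t:ℝ) * 2^d < 2^n₂ * 2^d := by
            apply mul_lt_mul_of_pos_right ht' (by positivity)
        _ = 1 * 2^n₁ := by rw [one_mul, ← pow_add]; rw [show n₂ + d = n₁ by omega]
    have hterm2 : ∀ s ∈ range (2^d),
        dnn (((s * 2^n₂ + t : ℕ):ℝ)/2^n₁) * dnn (((s * 2^n₂ + t : ℕ):ℝ)/2^n₂)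
        = dnn ((s:ℝ)/2^d + (t:ℝ)/2^n₁) * dnn ((t:ℝ)/2^n₂) := by
      intro s _
      rw [dnn_nat_div s t n₂]
      congr 1
      congr 1
      push_cast
      rw [← hdn, pow_add]
      field_simp
    rw [Finset.sum_congr rfl hterm2, ← Finset.sum_mul,
      sum_dnn_shift d hd1 _ hφ0 hφ1]
    ring
  rw [Finset.sum_congr rfl hstep2, ← Finset.sum_mul]
  have hlast : ∑ t ∈ range (2^n₂), dnn ((t:ℝ)/2^n₂) = 2^n₂/4 := by
    have := sum_dnn_shift n₂ hn₂1 0 le_rfl (by positivity)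
    simpa using this
  rw [hlast]
  rw [show m = u₁ + (d + n₂) by omega, pow_add, pow_add]
  push_cast
  ring
end

section
/- For integers $m \geq 1$ and $u \in \{0, \dots, m-1\}$, we have $\sum_{\beta \in \mathbb{Q}^*(2^m)} \|2^{u}\beta\|^2 = \frac{2^{2m} + 2^{2u+1}}{3 \cdot 2^{m+2}}$. -/
open Finset

/-! Since `2^u · k / 2^m = k / N` with `N = 2^(m-u) = 2M` even, and
`‖k / N‖ = min (k mod N, N - k mod N) / N`, the sum runs `2^u` times over one period, where
`∑_{j<2M} min (j, 2M - j)² = ∑_{j<M} (j² + (j+1)²) = M (2M² + 1) / 3`. -/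

theorem Finset.sum_range_mul_mod {M : Type*} [AddCommMonoid M] (f : ℕ → M) (c N : ℕ) :
    ∑ k ∈ range (c * N), f (k % N) = c • ∑ j ∈ range N, f j := by
  induction c with
  | zero => simp
  | succ c ih =>
    rw [succ_nsmul, ← ih, Nat.succ_mul, sum_range_add]
    congr 1
    refine sum_congr rfl fun j hj => ?_
    rw [Nat.add_comm, Nat.add_mul_mod_self_right, Nat.mod_eq_of_lt (mem_range.mp hj)]

theorem sum_range_sq_add_succ_sq (M : ℕ) :
    ∑ j ∈ range M, ((j : ℝ) ^ 2 + ((j : ℝ) + 1) ^ 2) = M * (2 * (M : ℝ) ^ 2 + 1) / 3 := by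
  induction M with
  | zero => simp
  | succ M ih => rw [sum_range_succ, ih]; push_cast; ring

theorem sum_range_min_sub_sq (M : ℕ) :
    ∑ j ∈ range (2 * M), ((min j (2 * M - j) : ℕ) : ℝ) ^ 2 = M * (2 * (M : ℝ) ^ 2 + 1) / 3 := by
  have lower : ∀ j ∈ range M, ((min j (2 * M - j) : ℕ) : ℝ) ^ 2 = (j : ℝ) ^ 2 := by
    intro j hj
    rw [min_eq_left (by grind)]
  have upper : ∀ j ∈ range M,
      ((min (M + j) (2 * M - (M + j)) : ℕ) : ℝ) ^ 2 = (((M - 1 - j : ℕ) : ℝ) + 1) ^ 2 := by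
    intro j hj
    have hj : j < M := mem_range.mp hj
    rw [min_eq_right (by omega), show 2 * M - (M + j) = (M - 1 - j) + 1 by omega]
    push_cast
    ring
  rw [show range (2 * M) = range (M + M) by rw [two_mul], sum_range_add, sum_congr rfl lower,
    sum_congr rfl upper, sum_range_reflect (fun j => ((j : ℝ) + 1) ^ 2), ← sum_add_distrib,
    sum_range_sq_add_succ_sq]

theorem sum_range_dnn_div_sq (c M : ℕ) :
    ∑ k ∈ range (c * (2 * M)), dnn ((k : ℝ) / (2 * M : ℕ)) ^ 2
      = c * (M * (2 * (M : ℝ) ^ 2 + 1) / 3) / ((2 * M : ℕ) : ℝ) ^ 2 := by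
  simp_rw [dnn, abs_sub_round_div_natCast_eq, div_pow, ← sum_div]
  rw [sum_range_mul_mod (fun j => ((min j (2 * M - j) : ℕ) : ℝ) ^ 2), sum_range_min_sub_sq,
    nsmul_eq_mul]

theorem stmt1 (m : ℕ) (hm : 1 ≤ m) (u : ℕ) (hu : u ≤ m - 1) :
    ∑ k ∈ Finset.Ioo (0:ℕ) (2 ^ m), dnn (2 ^ u * ((k : ℝ) / 2 ^ m)) ^ 2
      = ((2 : ℝ) ^ (2 * m) + 2 ^ (2 * u + 1)) / (3 * 2 ^ (m + 2)) := by
  obtain ⟨v, rfl⟩ : ∃ v, m = u + v + 1 := ⟨m - u - 1, by omega⟩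
  have rescale : ∀ k : ℕ, (2 : ℝ) ^ u * ((k : ℝ) / 2 ^ (u + v + 1)) = k / (2 * 2 ^ v : ℕ) := by
    intro k
    rw [show (2 : ℝ) ^ (u + v + 1) = 2 ^ u * (2 * 2 ^ v) by ring]
    push_cast
    field_simp
  have drop_zero : ∀ f : ℕ → ℝ, f 0 = 0 →
      ∑ k ∈ Ioo 0 (2 ^ (u + v + 1)), f k = ∑ k ∈ range (2 ^ (u + v + 1)), f k := by
    intro f hf
    rw [sum_range_eq_add_Ico _ (by positivity), ← Ico_add_one_left_eq_Ioo, hf, zero_add, zero_add]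
  rw [drop_zero _ (by simp [dnn])]
  simp_rw [rescale]
  rw [show 2 ^ (u + v + 1) = 2 ^ u * (2 * 2 ^ v) by ring, sum_range_dnn_div_sq]
  push_cast
  field_simp
  ring
end

section
/- Let $m \geq 1$, $\boldsymbol{\sigma} \in \{0,1\}^m$, and let $\boldsymbol{\sigma}^*$ be the complementary shift given by $\sigma_j^* = \sigma_j \oplus 1$. For $u_1, u_2 \in \{0, \dots, m-1\}$ with $u_1 \neq u_2$ and any fixed $m$-bit $\beta$, we have $\sum_{\alpha \in \mathbb{Q}^*(2^m)} (\alpha_{m-u_1} \oplus \alpha_{m+1-j_1(u_1)})(\alpha_{m-u_2} \oplus \alpha_{m+1-j_2(u_2)}) = 2^{m-2}$, where $j_1$ and $j_2$ are the index functions associated with the shifts $\boldsymbol{\sigma}$ and $\boldsymbol{\sigma}^*$ respectively. -/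
/-!
Write `F_u(α) = α_{m-u} ⊕ α_{m+1-j(u)}`. Since `j(u) ≤ u` is determined by the digits
`α_i` with `i > m - u`, the function `F_u` only depends on the digits `α_i` with `i ≥ m - u`,
and flipping the digit `α_{m-u}` turns `F_u` into `1 - F_u`, whatever the shift. For `u₁ < u₂`,
flipping `α_{m-u₂}` therefore fixes `F_{u₁}` and complements `F_{u₂}`, which halves the sum:
`∑ F_{u₁} F_{u₂} = ½ ∑ F_{u₁}`; flipping `α_{m-u₁}` gives `∑ F_{u₁} = 2^m / 2` in the same way.
The excluded `α = 0` contributes nothing.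
-/

open Finset

lemma Nat.findGreatest_congr {P Q : ℕ → Prop} [DecidablePred P] [DecidablePred Q] {n : ℕ}
    (h : ∀ j, 0 < j → j ≤ n → (P j ↔ Q j)) :
    Nat.findGreatest P n = Nat.findGreatest Q n := by
  induction n with
  | zero => rfl
  | succ n ih =>
    rw [Nat.findGreatest_succ, Nat.findGreatest_succ,
      if_congr (h (n + 1) n.succ_pos le_rfl) rfl (ih fun j hj hjn => h j hj (by omega))]

section Flip

variable {ι : Type*} [DecidableEq ι]

def flipAt (p : ι) (a : ι → Bool) : ι → Bool := Function.update a p (!a p)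

lemma flipAt_involutive (p : ι) : Function.Involutive (flipAt p) := by
  intro a
  funext i
  rcases eq_or_ne i p with rfl | h
  · simp [flipAt]
  · simp [flipAt, Function.update_of_ne h]

lemma sum_mul_eq_half_sum_of_flipAt [Fintype ι] (p : ι) {f g : (ι → Bool) → ℝ}
    (hf : ∀ a, f (flipAt p a) = 1 - f a) (hg : ∀ a, g (flipAt p a) = g a) :
    ∑ a, g a * f a = (∑ a, g a) / 2 := by
  have hflip : ∑ a, g a * f a = ∑ a, g a * (1 - f a) := by
    rw [← Fintype.sum_bijective _ (flipAt_involutive p).bijective _ _ fun a => rfl]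
    simp only [hf, hg]
  have hsum : ∑ a, g a * f a + ∑ a, g a * (1 - f a) = ∑ a, g a := by
    rw [← sum_add_distrib]
    exact sum_congr rfl fun a _ => by ring
  linarith

lemma sum_eq_half_card_of_flipAt [Fintype ι] (p : ι) {f : (ι → Bool) → ℝ}
    (hf : ∀ a, f (flipAt p a) = 1 - f a) :
    ∑ a, f a = 2 ^ Fintype.card ι / 2 := by
  simpa using sum_mul_eq_half_sum_of_flipAt p hf (g := fun _ => 1) fun _ => rfl

end Flip

section Digits

variable {m : ℕ}

lemma dig_flipAt_of_ne (a : Fin m → Bool) (p : Fin m) {i : ℕ} (h : i ≠ p.val + 1) :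
    dig m (flipAt p a) i = dig m a i := by
  unfold dig
  split_ifs with hi
  · exact Function.update_of_ne (Fin.ne_of_val_ne (by dsimp only; omega)) _ _
  · rfl

lemma dig_flipAt_self (a : Fin m → Bool) (p : Fin m) :
    dig m (flipAt p a) (p.val + 1) = !dig m a (p.val + 1) := by
  simp [dig, flipAt, p.isLt]

lemma dig_const_false (i : ℕ) : dig m (fun _ => false) i = false := by
  unfold dig
  split <;> rfl

lemma jfun_le (a b τ : Fin m → Bool) (u : ℕ) : jfun m a b τ u ≤ u :=
  Nat.findGreatest_le u

lemma jfun_congr {a a' : Fin m → Bool} (b τ : Fin m → Bool) {u : ℕ}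
    (h : ∀ i, m - u < i → dig m a i = dig m a' i) :
    jfun m a b τ u = jfun m a' b τ u :=
  Nat.findGreatest_congr fun j hj hju => by
    by_cases hjm : j ≤ m
    · rw [h (m + 1 - j) (by omega)]
    · simp [dig, show ¬m + 1 - j ≥ 1 by omega]

def jfunXor (m : ℕ) (b τ : Fin m → Bool) (u : ℕ) (a : Fin m → Bool) : ℝ :=
  bitr (xor (dig m a (m - u)) (dig m a (m + 1 - jfun m a b τ u)))

lemma jfunXor_congr {a a' : Fin m → Bool} (b τ : Fin m → Bool) {u : ℕ}
    (h : ∀ i, m - u ≤ i → dig m a i = dig m a' i) :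
    jfunXor m b τ u a = jfunXor m b τ u a' := by
  unfold jfunXor
  rw [jfun_congr b τ fun i hi => h i hi.le, h _ le_rfl,
    h _ (by have := jfun_le a' b τ u; omega)]

lemma jfunXor_flipAt_of_lt (b τ : Fin m → Bool) {u : ℕ} (a : Fin m → Bool) {p : Fin m}
    (hp : p.val + 1 < m - u) :
    jfunXor m b τ u (flipAt p a) = jfunXor m b τ u a :=
  jfunXor_congr b τ fun _ hi => dig_flipAt_of_ne a p (by omega)

lemma jfunXor_flipAt (b τ : Fin m → Bool) {u : ℕ} (a : Fin m → Bool) {p : Fin m}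
    (hp : p.val + 1 = m - u) :
    jfunXor m b τ u (flipAt p a) = 1 - jfunXor m b τ u a := by
  have hj : jfun m (flipAt p a) b τ u = jfun m a b τ u :=
    jfun_congr b τ fun _ hi => dig_flipAt_of_ne a p (by omega)
  have hu : u < m := by omega
  unfold jfunXor
  rw [hj, dig_flipAt_of_ne a p (i := m + 1 - jfun m a b τ u) (by have := jfun_le a b τ u; omega), ← hp, dig_flipAt_self]
  cases dig m a (p.val + 1) <;> cases dig m a (m + 1 - jfun m a b τ u) <;> simp [bitr]

lemma sum_jfunXor_mul_jfunXor (b σ₁ σ₂ : Fin m → Bool) {u₁ u₂ : ℕ}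
    (hu : u₁ < u₂) (hu₂ : u₂ < m) :
    ∑ a, jfunXor m b σ₁ u₁ a * jfunXor m b σ₂ u₂ a = 2 ^ m / 4 := by
  let p₁ : Fin m := ⟨m - u₁ - 1, by omega⟩
  let p₂ : Fin m := ⟨m - u₂ - 1, by omega⟩
  have hF₁ : ∑ a, jfunXor m b σ₁ u₁ a = 2 ^ m / 2 := by
    simpa using sum_eq_half_card_of_flipAt p₁
      fun a => jfunXor_flipAt b σ₁ a (p := p₁) (by simp only [p₁]; omega)
  rw [sum_mul_eq_half_sum_of_flipAt p₂
    (fun a => jfunXor_flipAt b σ₂ a (p := p₂) (by simp only [p₂]; omega))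
    (fun a => jfunXor_flipAt_of_lt b σ₁ a (p := p₂) (by simp only [p₂]; omega)), hF₁]
  ring

end Digits

theorem stmt6_general (m : ℕ) (σ b : Fin m → Bool) (u₁ u₂ : ℕ)
    (h₁ : u₁ ≤ m - 1) (h₂ : u₂ ≤ m - 1) (hne : u₁ ≠ u₂) :
    ∑ a ∈ Finset.univ.filter (fun a : Fin m → Bool => a ≠ fun _ => false),
      bitr (xor (dig m a (m - u₁)) (dig m a (m + 1 - jfun m a b σ u₁)))
        * bitr (xor (dig m a (m - u₂)) (dig m a (m + 1 - jfun m a b (fun j => !(σ j)) u₂)))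
      = (2 : ℝ) ^ m / 4 := by
  change ∑ a ∈ univ.filter _, jfunXor m b σ u₁ a * jfunXor m b (fun j => !(σ j)) u₂ a = _
  rw [filter_ne', sum_erase _ (by simp [jfunXor, dig_const_false, bitr])]
  rcases hne.lt_or_gt with h | h
  · exact sum_jfunXor_mul_jfunXor b σ _ h (by omega)
  · simp_rw [mul_comm (jfunXor m b σ u₁ _)]
    exact sum_jfunXor_mul_jfunXor b _ σ h (by omega)

theorem stmt6 (m : ℕ) (hm : 1 ≤ m) (σ b : Fin m → Bool) (u₁ u₂ : ℕ)
    (h₁ : u₁ ≤ m - 1) (h₂ : u₂ ≤ m - 1) (hne : u₁ ≠ u₂) :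
    ∑ a ∈ Finset.univ.filter (fun a : Fin m → Bool => a ≠ fun _ => false),
      bitr (xor (dig m a (m - u₁)) (dig m a (m + 1 - jfun m a b σ u₁)))
        * bitr (xor (dig m a (m - u₂)) (dig m a (m + 1 - jfun m a b (fun j => !(σ j)) u₂)))
      = (2 : ℝ) ^ m / 4 :=
  stmt6_general m σ b u₁ u₂ h₁ h₂ hne
end

section
/- Let $m \geq 1$, $\boldsymbol{\sigma} \in \{0,1\}^m$, $\boldsymbol{\sigma}^*$ its complement, and fix an $m$-bit $\beta$ with digits $\beta_j$; set $\gamma_j = \beta_j \oplus \sigma_j$. For $u \in \{0, 1\}$, $\sum_{\alpha \in \mathbb{Q}^*(2^m)} (\alpha_{m-u} \oplus \alpha_{m+1-j_1(u)})(\alpha_{m-u} \oplus \alpha_{m+1-j_2(u)}) = 2^{m-u-1}$, and for $u \in \{2, \dots, m-1\}$ this sum equals $2^{m-u-1}\bigl(1 + \sum_{j=1}^{u-1} 2^j ((\gamma_j \oplus 1)\gamma_u + \gamma_j(\gamma_u \oplus 1))\bigr)$, where $j_1, j_2$ are the index functions for shifts $\boldsymbol{\sigma}, \boldsymbol{\sigma}^*$.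 -/
open Finset

/-!
Write `q_j = α_{m+1-j}` and `γ_j = β_j ⊕ σ_j`. Complementing the shift complements `γ`, so
`j₁(u)` and `j₂(u)` are the last `j ≤ u` at which `q` disagrees, resp. agrees, with `γ`; one of
them is `u` itself. The summand is therefore `1` exactly when `α_{m-u}` and the value of `q` at
the other index both differ from `q_u`. The digits of `α` are independent fair bits, so every
such event is counted by fixing one digit at a time, which halves the count. The value of `q`
at the last disagreement up to `u` obeys a one-step recursion in `u`, and its distribution is
a geometric sum; combining the two cases for `q_u` gives the formula.
-/
theorem two_nsmul_sum_ite_apply_eq {ι M : Type*} [Fintype ι] [DecidableEq ι] [AddCommMonoid M]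
    (i : ι) (v : Bool) (F : (ι → Bool) → M) (hF : ∀ a w, F (Function.update a i w) = F a) :
    2 • ∑ a, (if a i = v then F a else 0) = ∑ a, F a := by
  have hflip : ∑ a, (if a i = v then F a else 0) = ∑ a, (if a i = !v then F a else 0) := by
    have hinv : Function.Involutive fun a : ι → Bool => Function.update a i (!a i) := by
      intro a; simp
    rw [← hinv.bijective.sum_comp (fun a => if a i = !v then F a else 0)]
    refine sum_congr rfl fun a _ => ?_
    simp [hF]
  rw [two_nsmul]
  nth_rewrite 2 [hflip]
  rw [← sum_add_distrib]
  refine sum_congr rfl fun a _ => ?_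
  cases a i <;> cases v <;> simp

theorem four_nsmul_sum_ite_apply_eq {ι M : Type*} [Fintype ι] [DecidableEq ι] [AddCommMonoid M]
    {i i' : ι} (hii' : i ≠ i') (v v' : Bool) (F : (ι → Bool) → M)
    (hF : ∀ a w, F (Function.update a i w) = F a)
    (hF' : ∀ a w, F (Function.update a i' w) = F a) :
    4 • ∑ a, (if a i = v then if a i' = v' then F a else 0 else 0) = ∑ a, F a := by
  rw [show 4 = 2 * 2 from rfl, mul_nsmul', two_nsmul_sum_ite_apply_eq i v _ fun a w => by
    rw [Function.update_of_ne hii'.symm, hF], two_nsmul_sum_ite_apply_eq i' v' F hF']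

lemma dig_update_of_ne {m : ℕ} (a : Fin m → Bool) (i : Fin m) (w : Bool) {k : ℕ}
    (hk : k ≠ i.val + 1) : dig m (Function.update a i w) k = dig m a k := by
  unfold dig
  split_ifs
  · exact Function.update_of_ne (fun h => hk (by rw [← h, Fin.val_mk]; omega)) _ _
  · rfl

/-- The digit `α_{m+1-j}` of `α`; in particular `revDig m a 0 = false`. -/
def revDig (m : ℕ) (a : Fin m → Bool) (j : ℕ) : Bool := dig m a (m + 1 - j)

lemma revDig_zero {m : ℕ} (a : Fin m → Bool) : revDig m a 0 = false := by
  simp [revDig, dig]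

lemma revDig_succ {m : ℕ} (a : Fin m → Bool) (u : ℕ) :
    revDig m a (u + 1) = dig m a (m - u) := by
  simp [revDig]

lemma revDig_eq_apply {m j : ℕ} (a : Fin m → Bool) (hj : 1 ≤ j) (hjm : j ≤ m) :
    revDig m a j = a ⟨m - j, by omega⟩ := by
  unfold revDig dig
  rw [dif_pos (by omega)]
  congr 2
  omega

lemma revDig_update_of_lt {m n : ℕ} (a : Fin m → Bool) (i : Fin m) (w : Bool)
    (hi : i.val + n < m) {j : ℕ} (hj : j ≤ n) :
    revDig m (Function.update a i w) j = revDig m a j :=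
  dig_update_of_ne a i w (by omega)

/-- With `q = revDig m a` and `γ j = β_j ⊕ τ_j` this is the digit `α_{m+1-j_τ(u)}`;
`Nat.findGreatest` returns `0`, hence the value `q 0`, when there is no mismatch. -/
def lastMismatchVal (γ q : ℕ → Bool) (u : ℕ) : Bool :=
  q (Nat.findGreatest (fun j => q j ≠ γ j) u)

@[simp] lemma lastMismatchVal_zero (γ q : ℕ → Bool) : lastMismatchVal γ q 0 = q 0 := rfl

lemma lastMismatchVal_succ (γ q : ℕ → Bool) (u : ℕ) :
    lastMismatchVal γ q (u + 1) =
      if q (u + 1) = γ (u + 1) then lastMismatchVal γ q u else !γ (u + 1) := by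
  unfold lastMismatchVal
  rw [Nat.findGreatest_succ]
  by_cases h : q (u + 1) = γ (u + 1)
  · simp [h]
  · simp [Bool.eq_not_of_ne h]

lemma lastMismatchVal_congr {γ γ' q q' : ℕ → Bool} {u : ℕ}
    (hγ : ∀ j ∈ Icc 1 u, γ j = γ' j) (hq : ∀ j ≤ u, q j = q' j) :
    lastMismatchVal γ q u = lastMismatchVal γ' q' u := by
  induction u with
  | zero => simp [hq 0 le_rfl]
  | succ u ih =>
    rw [lastMismatchVal_succ, lastMismatchVal_succ, hq (u + 1) le_rfl,
      hγ (u + 1) (by simp),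
      ih (fun j hj => hγ j (by rw [mem_Icc] at hj ⊢; omega)) fun j hj => hq j (by omega)]

lemma lastMismatchVal_revDig_update {m n : ℕ} (γ : ℕ → Bool) (a : Fin m → Bool) (i : Fin m)
    (w : Bool) (hi : i.val + n < m) :
    lastMismatchVal γ (revDig m (Function.update a i w)) n = lastMismatchVal γ (revDig m a) n :=
  lastMismatchVal_congr (fun _ _ => rfl) fun _ hj => revDig_update_of_lt a i w hi hj

/-- Without a mismatch the value is `q 0 = false`; the last mismatch sits at `j + 1` with
probability `2 ^ (j - u)`, and then the value is `!γ (j + 1)`. -/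
theorem two_pow_mul_sum_lastMismatchVal_eq {m u : ℕ} (hu : u ≤ m) (γ : ℕ → Bool)
    (y : Bool) :
    2 ^ u * ∑ a : Fin m → Bool, (if lastMismatchVal γ (revDig m a) u = y then (1 : ℝ) else 0)
      = 2 ^ m * (bitr (!y) + ∑ j ∈ range u, 2 ^ j * bitr (xor y (γ (j + 1)))) := by
  induction u with
  | zero => cases y <;> simp [revDig_zero, bitr]
  | succ n ih =>
    let i : Fin m := ⟨m - (n + 1), by omega⟩
    have hsplit : ∀ a : Fin m → Bool,
        (if lastMismatchVal γ (revDig m a) (n + 1) = y then (1 : ℝ) else 0) =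
          (if a i = γ (n + 1) then (if lastMismatchVal γ (revDig m a) n = y then 1 else 0) else 0)
            + (if a i = !γ (n + 1) then bitr (xor y (γ (n + 1))) else 0) := by
      intro a
      rw [lastMismatchVal_succ, revDig_eq_apply a (by omega) hu]
      generalize a i = x
      cases x <;> cases γ (n + 1) <;> cases y <;> simp [bitr]
    have hmatch := two_nsmul_sum_ite_apply_eq i (γ (n + 1))
      (fun a => if lastMismatchVal γ (revDig m a) n = y then (1 : ℝ) else 0)
      fun a w => by rw [lastMismatchVal_revDig_update γ a i w (show m - (n + 1) + n < m by omega)]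
    have hmismatch := two_nsmul_sum_ite_apply_eq i (!γ (n + 1))
      (fun _ => bitr (xor y (γ (n + 1)))) fun _ _ => rfl
    simp only [sum_const, card_univ, Fintype.card_fun, Fintype.card_bool, Fintype.card_fin,
      nsmul_eq_mul, Nat.cast_pow, Nat.cast_ofNat] at hmatch hmismatch
    rw [sum_congr rfl fun a _ => hsplit a, sum_add_distrib, sum_range_succ]
    linear_combination (2 : ℝ) ^ n * hmatch + 2 ^ n * hmismatch + ih (by omega)

lemma sum_Icc_one_eq_sum_range {M : Type*} [AddCommMonoid M] (f : ℕ → M) (n : ℕ) :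
    ∑ j ∈ Icc 1 n, f j = ∑ j ∈ range n, f (j + 1) := by
  rw [← Ico_add_one_right_eq_Icc, sum_Ico_eq_sum_range]
  simp [add_comm]

lemma bitr_xor_mul_bitr_xor_lastMismatchVal_succ (γ q : ℕ → Bool) (n : ℕ) :
    bitr (xor (q (n + 2)) (lastMismatchVal γ q (n + 1)))
        * bitr (xor (q (n + 2)) (lastMismatchVal (fun j => !γ j) q (n + 1)))
      = (if q (n + 1) = !γ (n + 1) then if q (n + 2) = γ (n + 1) then
            if lastMismatchVal (fun j => !γ j) q n = !γ (n + 1) then 1 else 0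
          else 0 else 0)
        + (if q (n + 1) = γ (n + 1) then if q (n + 2) = !γ (n + 1) then
            if lastMismatchVal γ q n = γ (n + 1) then 1 else 0
          else 0 else 0) := by
  rw [lastMismatchVal_succ, lastMismatchVal_succ]
  generalize q (n + 1) = x, q (n + 2) = x', γ (n + 1) = g,
    lastMismatchVal γ q n = v, lastMismatchVal (fun j => !γ j) q n = v'
  cases x <;> cases x' <;> cases g <;> cases v <;> cases v' <;> simp [bitr]

lemma four_mul_sum_ite_ite_lastMismatchVal {m n : ℕ} (hn : n + 1 < m) (x x' : Bool)
    (γ : ℕ → Bool) (y : Bool) :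
    4 * ∑ a : Fin m → Bool, (if a ⟨m - (n + 1), by omega⟩ = x then
          if a ⟨m - (n + 2), by omega⟩ = x' then
            if lastMismatchVal γ (revDig m a) n = y then (1 : ℝ) else 0 else 0 else 0)
      = ∑ a : Fin m → Bool, if lastMismatchVal γ (revDig m a) n = y then (1 : ℝ) else 0 := by
  have h := four_nsmul_sum_ite_apply_eq
    (i := ⟨m - (n + 1), by omega⟩) (i' := ⟨m - (n + 2), by omega⟩)
    (Fin.ne_of_val_ne (show m - (n + 1) ≠ m - (n + 2) by omega)) x x'
    (fun a => if lastMismatchVal γ (revDig m a) n = y then (1 : ℝ) else 0)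
    (fun a w => by rw [lastMismatchVal_revDig_update γ a _ w (show m - (n + 1) + n < m by omega)])
    (fun a w => by rw [lastMismatchVal_revDig_update γ a _ w (show m - (n + 2) + n < m by omega)])
  rwa [nsmul_eq_mul, Nat.cast_ofNat] at h

lemma bitr_not_add_sum_add_bitr_add_sum (γ : ℕ → Bool) (n : ℕ) :
    (bitr (!!γ (n + 1)) + ∑ j ∈ range n, 2 ^ j * bitr (xor (!γ (n + 1)) (!γ (j + 1))))
      + (bitr (!γ (n + 1)) + ∑ j ∈ range n, 2 ^ j * bitr (xor (γ (n + 1)) (γ (j + 1))))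
      = 1 + ∑ j ∈ Icc 1 n, (2 : ℝ) ^ j * bitr (xor (γ j) (γ (n + 1))) := by
  have hb : bitr (γ (n + 1)) + bitr (!γ (n + 1)) = 1 := by cases γ (n + 1) <;> simp [bitr]
  rw [sum_Icc_one_eq_sum_range]
  simp only [Bool.not_not, Bool.not_xor_not, Bool.xor_comm (γ (n + 1)), pow_succ,
    mul_right_comm _ (2 : ℝ), ← sum_mul]
  linear_combination hb

theorem two_pow_mul_sum_bitr_xor_lastMismatchVal {m u : ℕ} (hu : u < m) (γ : ℕ → Bool) :
    2 ^ (u + 1) * ∑ a : Fin m → Bool,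
        bitr (xor (revDig m a (u + 1)) (lastMismatchVal γ (revDig m a) u))
          * bitr (xor (revDig m a (u + 1)) (lastMismatchVal (fun j => !γ j) (revDig m a) u))
      = 2 ^ m * (1 + ∑ j ∈ Icc 1 (u - 1), 2 ^ j * bitr (xor (γ j) (γ u))) := by
  cases u with
  | zero =>
    let i : Fin m := ⟨m - 1, by omega⟩
    have hpt : ∀ a : Fin m → Bool,
        bitr (xor (revDig m a 1) (lastMismatchVal γ (revDig m a) 0))
          * bitr (xor (revDig m a 1) (lastMismatchVal (fun j => !γ j) (revDig m a) 0))
          = if a i = true then 1 else 0 := by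
      intro a
      rw [lastMismatchVal_zero, lastMismatchVal_zero, revDig_zero, revDig_eq_apply a le_rfl hu]
      cases a i <;> simp [bitr]
    rw [sum_congr rfl fun a _ => hpt a]
    simpa using two_nsmul_sum_ite_apply_eq i true (fun _ => (1 : ℝ)) fun _ _ => rfl
  | succ n =>
    have hd : ∀ a, revDig m a (n + 1) = a ⟨m - (n + 1), by omega⟩ :=
      fun a => revDig_eq_apply a (by omega) (by omega)
    have hc : ∀ a, revDig m a (n + 2) = a ⟨m - (n + 2), by omega⟩ :=
      fun a => revDig_eq_apply a (by omega) (by omega)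
    simp only [bitr_xor_mul_bitr_xor_lastMismatchVal_succ _ (revDig m _)]
    simp only [hd, hc, sum_add_distrib, Nat.add_sub_cancel]
    have hn : n ≤ m := by omega
    linear_combination
      (2 : ℝ) ^ n * four_mul_sum_ite_ite_lastMismatchVal hu
          (!γ (n + 1)) (γ (n + 1)) (fun j => !γ j) (!γ (n + 1))
      + 2 ^ n * four_mul_sum_ite_ite_lastMismatchVal hu (γ (n + 1)) (!γ (n + 1)) γ (γ (n + 1))
      + two_pow_mul_sum_lastMismatchVal_eq hn (fun j => !γ j) (!γ (n + 1))
      + two_pow_mul_sum_lastMismatchVal_eq hn γ (γ (n + 1))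
      + 2 ^ m * bitr_not_add_sum_add_bitr_add_sum γ n

lemma dig_sub_jfun {m : ℕ} (a b τ : Fin m → Bool) (u : ℕ) :
    dig m a (m + 1 - jfun m a b τ u)
      = lastMismatchVal (fun j => xor (dig m b j) (dig m τ j)) (revDig m a) u := rfl

lemma dig_not {m j : ℕ} (σ : Fin m → Bool) (hj : 1 ≤ j) (hjm : j ≤ m) :
    dig m (fun i => !σ i) j = !dig m σ j := by
  simp [dig, hj, hjm]

lemma bitr_xor (x y : Bool) : bitr (xor x y) = bitr (!x) * bitr y + bitr x * bitr (!y) := by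
  cases x <;> cases y <;> simp [bitr]

theorem two_pow_mul_sum_jfun {m u : ℕ} (hu : u < m) (σ b : Fin m → Bool) :
    2 ^ (u + 1) * ∑ a : Fin m → Bool,
        bitr (xor (dig m a (m - u)) (dig m a (m + 1 - jfun m a b σ u)))
          * bitr (xor (dig m a (m - u)) (dig m a (m + 1 - jfun m a b (fun j => !(σ j)) u)))
      = 2 ^ m * (1 + ∑ j ∈ Icc 1 (u - 1), 2 ^ j *
          bitr (xor (xor (dig m b j) (dig m σ j)) (xor (dig m b u) (dig m σ u)))) := by
  have hnot : ∀ a : Fin m → Bool,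
      lastMismatchVal (fun j => xor (dig m b j) (dig m (fun i => !σ i) j)) (revDig m a) u
        = lastMismatchVal (fun j => !xor (dig m b j) (dig m σ j)) (revDig m a) u :=
    fun a => lastMismatchVal_congr
      (fun j hj => by rw [mem_Icc] at hj; simp [dig_not σ hj.1 (by omega)]) fun _ _ => rfl
  simp only [← revDig_succ, dig_sub_jfun, hnot]
  exact two_pow_mul_sum_bitr_xor_lastMismatchVal hu _

theorem stmt7 (m : ℕ) (hm : 1 ≤ m) (σ b : Fin m → Bool) (u : ℕ) (hu : u ≤ m - 1) :
    (u ≤ 1 →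
      ∑ a ∈ Finset.univ.filter (fun a : Fin m → Bool => a ≠ fun _ => false),
        bitr (xor (dig m a (m - u)) (dig m a (m + 1 - jfun m a b σ u)))
          * bitr (xor (dig m a (m - u)) (dig m a (m + 1 - jfun m a b (fun j => !(σ j)) u)))
        = (2 : ℝ) ^ m / 2 ^ (u + 1)) ∧
    (2 ≤ u →
      ∑ a ∈ Finset.univ.filter (fun a : Fin m → Bool => a ≠ fun _ => false),
        bitr (xor (dig m a (m - u)) (dig m a (m + 1 - jfun m a b σ u)))
          * bitr (xor (dig m a (m - u)) (dig m a (m + 1 - jfun m a b (fun j => !(σ j)) u)))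
        = (2 : ℝ) ^ m / 2 ^ (u + 1) *
            (1 + ∑ j ∈ Finset.Icc 1 (u - 1), (2 : ℝ) ^ j *
              (bitr (!(xor (dig m b j) (dig m σ j))) * bitr (xor (dig m b u) (dig m σ u))
                + bitr (xor (dig m b j) (dig m σ j)) * bitr (!(xor (dig m b u) (dig m σ u)))))) := by
  have hsum := two_pow_mul_sum_jfun (u := u) (by omega) σ b
  rw [← sum_filter_of_ne (p := fun a : Fin m → Bool => a ≠ fun _ => false)
    (by rintro a - ha rfl; simp [dig, bitr] at ha), mul_comm, ← eq_div_iff (by positivity),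
    mul_div_right_comm] at hsum
  refine ⟨fun hu1 => ?_, fun _ => ?_⟩
  · simpa [Icc_eq_empty_of_lt (show u - 1 < 1 by omega)] using hsum
  · simpa only [bitr_xor] using hsum
end

section
/- For every integer $m \geq 1$, $\int_0^{1-2^{-m}}\int_0^{1-2^{-m}} 2^{2m}(\alpha(m)\beta(m) - \alpha\beta)^2 \, d\alpha \, d\beta = -\frac{1}{72 \cdot 16^m}(2^m - 1)^2 (32 \cdot 2^m - 25 \cdot 4^m - 8)$, where $\alpha(m)$ denotes the smallest $m$-bit number (element of $\{k/2^m : k \in \mathbb{Z}\}$) greater than or equal to $\alpha$, and similarly for $\beta(m)$. -/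
open Finset

open Set intervalIntegral
open MeasureTheory (volume)

/-! Write `N = 2 ^ m` and `u = upm m`. The integrand is
`N² (u(α)² u(β)² - 2 (u(α) α) (u(β) β) + α² β²)`, a sum of products of a function of `α` and
the same function of `β`, so the double integral is a combination of the squares of the
integrals of `u²`, `u · id` and `id²` over `[0, (N - 1) / N]`. Since `u` is the constant
`(k + 1) / N` on each cell `(k / N, (k + 1) / N]`, the first two are sums of polynomials in `k`,
whose closed forms are proved by induction on the number of cells. -/

lemma integral_integral_sum_mul_eq_sum_sq {ι : Type*} (s : Finset ι) (c : ι → ℝ)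
    (f : ι → ℝ → ℝ) {a b : ℝ} (hf : ∀ i ∈ s, IntervalIntegrable (f i) volume a b) :
    ∫ x in a..b, ∫ y in a..b, ∑ i ∈ s, c i * (f i x * f i y)
      = ∑ i ∈ s, c i * (∫ x in a..b, f i x) ^ 2 := by
  have inner : ∀ x, ∫ y in a..b, ∑ i ∈ s, c i * (f i x * f i y)
      = ∑ i ∈ s, c i * (f i x * ∫ y in a..b, f i y) := fun x => by
    rw [integral_finsetSum fun i hi => ((hf i hi).const_mul (f i x)).const_mul (c i)]
    simp only [integral_const_mul]
  simp_rw [inner]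
  rw [integral_finsetSum fun i hi => ((hf i hi).mul_const _).const_mul (c i)]
  simp only [integral_const_mul, integral_mul_const, sq]

lemma intervalIntegrable_of_monotoneOn_Ici {f : ℝ → ℝ} {c a b : ℝ}
    (hf : MonotoneOn f (Ici c)) (ha : c ≤ a) (hb : c ≤ b) :
    IntervalIntegrable f volume a b :=
  (hf.mono fun _ hx => (le_min ha hb).trans hx.1).intervalIntegrable

lemma upm_mono (m : ℕ) : Monotone (upm m) := fun _ _ h =>
  div_le_div_of_nonneg_right (Int.cast_le.mpr (Int.ceil_mono (by gcongr))) (by positivity)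

lemma upm_nonneg (m : ℕ) {x : ℝ} (hx : 0 ≤ x) : 0 ≤ upm m x := by
  unfold upm; positivity

lemma upm_eq_of_mem_Ioc (m : ℕ) (k : ℤ) {x : ℝ}
    (hx : x ∈ Ioc ((k : ℝ) / 2 ^ m) ((k + 1) / 2 ^ m)) :
    upm m x = (k + 1) / 2 ^ m := by
  have hN : (0 : ℝ) < 2 ^ m := by positivity
  obtain ⟨h1, h2⟩ := hx
  rw [div_lt_iff₀ hN] at h1
  rw [le_div_iff₀ hN] at h2
  have hceil : ⌈(2 : ℝ) ^ m * x⌉ = k + 1 := by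
    rw [Int.ceil_eq_iff]
    push_cast
    constructor <;> linarith
  simp [upm, hceil]

lemma integral_comp_upm_cell (m : ℕ) (k : ℤ) (F : ℝ → ℝ → ℝ) :
    ∫ x in (k : ℝ) / 2 ^ m..(k + 1) / 2 ^ m, F (upm m x) x
      = ∫ x in (k : ℝ) / 2 ^ m..(k + 1) / 2 ^ m, F ((k + 1) / 2 ^ m) x := by
  have hle : (k : ℝ) / 2 ^ m ≤ (k + 1) / 2 ^ m := by gcongr; linarith
  refine integral_congr_uIoo fun x hx => ?_
  rw [uIoo_of_le hle] at hx
  simp only [upm_eq_of_mem_Ioc m k (Ioo_subset_Ioc_self hx)]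

lemma monotoneOn_upm_mul_id (m : ℕ) : MonotoneOn (fun x => upm m x * x) (Ici 0) :=
  (upm_mono m).monotoneOn _ |>.mul monotoneOn_id (fun _ hx => upm_nonneg m hx) fun _ hx => hx

lemma monotoneOn_upm_sq (m : ℕ) : MonotoneOn (fun x => upm m x ^ 2) (Ici 0) := fun _ hx _ _ h =>
  pow_le_pow_left₀ (upm_nonneg m hx) (upm_mono m h) 2

lemma integral_comp_upm_add_cell (m n : ℕ) (F : ℝ → ℝ → ℝ)
    (hF : MonotoneOn (fun x => F (upm m x) x) (Ici 0)) :
    ∫ x in (0 : ℝ)..(n + 1 : ℕ) / 2 ^ m, F (upm m x) x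
      = (∫ x in (0 : ℝ)..n / 2 ^ m, F (upm m x) x)
        + ∫ x in (n : ℝ) / 2 ^ m..(n + 1) / 2 ^ m, F ((n + 1) / 2 ^ m) x := by
  have cell := integral_comp_upm_cell m n F
  push_cast at cell ⊢
  rw [← cell, integral_add_adjacent_intervals]
  · exact intervalIntegrable_of_monotoneOn_Ici hF le_rfl (by positivity)
  · exact intervalIntegrable_of_monotoneOn_Ici hF (by positivity) (by positivity)

lemma integral_upm_sq (m n : ℕ) :
    ∫ x in (0 : ℝ)..n / 2 ^ m, upm m x ^ 2 = n * (n + 1) * (2 * n + 1) / (6 * (2 ^ m) ^ 3) := by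
  induction n with
  | zero => simp
  | succ n ih =>
    rw [integral_comp_upm_add_cell m n (fun u _ => u ^ 2) (monotoneOn_upm_sq m), ih,
      integral_const, smul_eq_mul]
    have hN : (2 : ℝ) ^ m ≠ 0 := by positivity
    generalize (2 : ℝ) ^ m = N at hN ⊢
    push_cast
    field_simp
    ring

lemma integral_upm_mul_id (m n : ℕ) :
    ∫ x in (0 : ℝ)..n / 2 ^ m, upm m x * x
      = n * (n + 1) * (4 * n - 1) / (12 * (2 ^ m) ^ 3) := by
  induction n with
  | zero => simp
  | succ n ih =>
    rw [integral_comp_upm_add_cell m n (fun u x => u * x) (monotoneOn_upm_mul_id m), ih,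
      integral_const_mul, integral_id]
    have hN : (2 : ℝ) ^ m ≠ 0 := by positivity
    generalize (2 : ℝ) ^ m = N at hN ⊢
    push_cast
    field_simp
    ring

theorem stmt15_general (m : ℕ) :
    (∫ α in (0:ℝ)..(1 - (2:ℝ)⁻¹ ^ m), ∫ β in (0:ℝ)..(1 - (2:ℝ)⁻¹ ^ m),
        (2 : ℝ) ^ (2 * m) * (upm m α * upm m β - α * β) ^ 2)
      = -(1 / (72 * 16 ^ m)) * ((2 : ℝ) ^ m - 1) ^ 2
          * (32 * 2 ^ m - 25 * 4 ^ m - 8) := by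
  set n : ℕ := 2 ^ m - 1
  have hn : (n : ℝ) = 2 ^ m - 1 := by
    rw [Nat.cast_sub Nat.one_le_two_pow]; push_cast; ring
  have hend : 1 - (2 : ℝ)⁻¹ ^ m = n / 2 ^ m := by
    rw [hn, inv_pow]; field_simp
  have hend_nonneg : (0 : ℝ) ≤ n / 2 ^ m := by positivity
  let c : Fin 3 → ℝ := ![2 ^ (2 * m), -2 * 2 ^ (2 * m), 2 ^ (2 * m)]
  let f : Fin 3 → ℝ → ℝ := ![fun x => upm m x ^ 2, fun x => upm m x * x, fun x => x ^ 2]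
  have hexpand : ∀ α β : ℝ, (2 : ℝ) ^ (2 * m) * (upm m α * upm m β - α * β) ^ 2
      = ∑ i, c i * (f i α * f i β) := fun α β => by
    simp only [Fin.sum_univ_three, c, f, Matrix.cons_val]; ring
  have hf : ∀ i ∈ Finset.univ, IntervalIntegrable (f i) volume 0 (n / 2 ^ m) := by
    intro i _
    fin_cases i
    · exact intervalIntegrable_of_monotoneOn_Ici (monotoneOn_upm_sq m) le_rfl hend_nonneg
    · exact intervalIntegrable_of_monotoneOn_Ici (monotoneOn_upm_mul_id m) le_rfl hend_nonneg
    · exact (continuous_pow 2).intervalIntegrable _ _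
  simp_rw [hend, hexpand]
  rw [integral_integral_sum_mul_eq_sum_sq _ c f hf]
  simp only [Fin.sum_univ_three, c, f, Matrix.cons_val]
  rw [integral_upm_sq, integral_upm_mul_id, integral_pow, hn,
    show (16 : ℝ) ^ m = (2 ^ m) ^ 4 by rw [← pow_mul, mul_comm, pow_mul]; norm_num,
    show (4 : ℝ) ^ m = (2 ^ m) ^ 2 by rw [← pow_mul, mul_comm, pow_mul]; norm_num, pow_mul']
  have hN : (2 : ℝ) ^ m ≠ 0 := by positivity
  generalize (2 : ℝ) ^ m = N at hN ⊢
  norm_num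
  field_simp
  ring

theorem stmt15 (m : ℕ) (hm : 1 ≤ m) :
    (∫ α in (0:ℝ)..(1 - (2:ℝ)⁻¹ ^ m), ∫ β in (0:ℝ)..(1 - (2:ℝ)⁻¹ ^ m),
        (2 : ℝ) ^ (2 * m) * (upm m α * upm m β - α * β) ^ 2)
      = -(1 / (72 * 16 ^ m)) * ((2 : ℝ) ^ m - 1) ^ 2
          * (32 * 2 ^ m - 25 * 4 ^ m - 8) :=
  stmt15_general m
end
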